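/- Let V be a finite vertex set, k ≥ 2, and let G_0, G_1, …, G_r be simple graphs on V such that for each i ∈ {0,…,r−1}, E(G_{i+1}) = E(G_i) ∪ {{v_i,u_i}} where v_i ≠ u_i and {v_i,u_i} ∉ E(G_i). Assume G_r has at least one proper k-colouring, and for each i let α_i ∈ [0,1] be such that for every pair of distinct colours c, q ∈ {1,…,k}: |S^i_q(c,c)| ≥ (1−α_i)·|Ω_i(c,c)| and |S^i_c(q,c)| ≥ (1−α_i)·|Ω_i(q,c)|. Let Y_0 be a uniformly random proper k-colouring of G_0, and for i = 0,…,r−1 let Y_{i+1} be the output of Update(G_i, v_i, u_i, Y_i, k). Let μ be the uniform distribution on the proper k-colourings of G_r and let μ̂ be the distribution of Y_r. Then ||μ − μ̂|| ≤ α_0 + α_1 + … + α_{r−1}. -/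

import Mathlib

open scoped Classical

/-- A proper `k`-colouring of a graph `G`: a map to `Fin k` giving distinct
colours to adjacent vertices. -/
def IsProperColoring {V : Type*} (G : SimpleGraph V) {k : ℕ} (σ : V → Fin k) : Prop :=
  ∀ ⦃x y : V⦄, G.Adj x y → σ x ≠ σ y

/-- The vertex set of the disagreement graph `Q(G, v, σ, q)`. -/
def disagreementSet {V : Type*} (G : SimpleGraph V) {k : ℕ} (v : V) (σ : V → Fin k)
    (q : Fin k) : Set V :=
  {x | ∃ p : G.Walk v x, ∀ w ∈ p.support, σ w = σ v ∨ σ w = q}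

/-- The `q`-switching of `σ` at `v`. -/
noncomputable def switching {V : Type*} (G : SimpleGraph V) {k : ℕ} (v : V) (σ : V → Fin k)
    (q : Fin k) : V → Fin k := fun x =>
  if x ∈ disagreementSet G v σ q then
    (if σ x = σ v then q else if σ x = q then σ v else σ x)
  else σ x

/-- There exists a path in `G` from `v` to `u` all of whose vertices get colours
in `{c, q}` under `σ`. -/
def TwoColouredPath {V : Type*} (G : SimpleGraph V) {k : ℕ} (σ : V → Fin k)
    (v u : V) (c q : Fin k) : Prop :=
  ∃ p : G.Walk v u, ∀ w ∈ p.support, σ w = c ∨ σ w = q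

/-- The one-step transition probability of `Update(G, v, u, ·, k)`: from colouring `σ`
to colouring `τ`.  If `σ v ≠ σ u` the output is `σ`; otherwise a colour `q ≠ σ v` is
chosen uniformly among the remaining `k - 1` colours and the output is the
`q`-switching of `σ` at `v`. -/
noncomputable def updateKernel {V : Type*} (G : SimpleGraph V) {k : ℕ} (v u : V)
    (σ τ : V → Fin k) : ℝ :=
  if σ v ≠ σ u then (if τ = σ then 1 else 0)
  else (1 / ((k : ℝ) - 1)) *
    ((Finset.univ.filter fun q : Fin k => q ≠ σ v ∧ switching G v σ q = τ).card : ℝ)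

set_option linter.unusedSectionVars false
set_option linter.unusedTactic false
set_option linter.unreachableTactic false

section Aux
variable {V : Type*} [Fintype V] [DecidableEq V] {k : ℕ}

lemma mem_disagreement_colour {G : SimpleGraph V} {v x : V} {σ : V → Fin k} {q : Fin k}
    (hx : x ∈ disagreementSet G v σ q) : σ x = σ v ∨ σ x = q := by
  obtain ⟨p, hp⟩ := hx
  exact hp x p.end_mem_support

lemma v_mem_disagreement (G : SimpleGraph V) (v : V) (σ : V → Fin k) (q : Fin k) :
    v ∈ disagreementSet G v σ q :=
  ⟨SimpleGraph.Walk.nil, by simp⟩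

lemma switching_v (G : SimpleGraph V) (v : V) (σ : V → Fin k) (q : Fin k) :
    switching G v σ q v = q := by
  simp [switching, v_mem_disagreement]

lemma switching_colour_iff (G : SimpleGraph V) (v : V) (σ : V → Fin k) (q : Fin k) (w : V) :
    (switching G v σ q w = σ v ∨ switching G v σ q w = q) ↔ (σ w = σ v ∨ σ w = q) := by
  unfold switching
  split_ifs with h1 h2 h3 <;> simp_all <;> tauto

lemma disagreement_switch (G : SimpleGraph V) (v : V) (σ : V → Fin k) (q : Fin k) :
    disagreementSet G v (switching G v σ q) (σ v) = disagreementSet G v σ q := by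
  have hv : switching G v σ q v = q := switching_v G v σ q
  ext x
  simp only [disagreementSet, Set.mem_setOf_eq]
  constructor <;> rintro ⟨p, hp⟩ <;> refine ⟨p, fun w hw => ?_⟩
  · have h := hp w hw
    rw [hv] at h
    exact (switching_colour_iff G v σ q w).mp h.symm
  · have h := hp w hw
    rw [hv]
    exact ((switching_colour_iff G v σ q w).mpr h).symm

lemma switching_involution (G : SimpleGraph V) (v : V) (σ : V → Fin k) (q : Fin k)
    (hq : q ≠ σ v) :
    switching G v (switching G v σ q) (σ v) = σ := by
  funext x
  have hQ := disagreement_switch G v σ q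
  have hv : switching G v σ q v = q := switching_v G v σ q
  by_cases hx : x ∈ disagreementSet G v σ q
  · have hcol : σ x = σ v ∨ σ x = q := mem_disagreement_colour hx
    show (if x ∈ disagreementSet G v (switching G v σ q) (σ v) then _ else _) = σ x
    rw [hQ, if_pos hx, hv]
    rcases hcol with h | h
    · simp only [switching, if_pos hx, if_pos h, if_pos rfl]
      exact h.symm
    · have hne : σ x ≠ σ v := by rw [h]; exact hq
      simp only [switching, if_pos hx, if_neg hne, if_pos h]
      simpa [Ne.symm hq] using h.symm
  · show (if x ∈ disagreementSet G v (switching G v σ q) (σ v) then _ else _) = σ x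
    rw [hQ, if_neg hx]
    simp only [switching, if_neg hx]

lemma adj_mem_disagreement {G : SimpleGraph V} {v x y : V} {σ : V → Fin k} {q : Fin k}
    (hx : x ∈ disagreementSet G v σ q) (hxy : G.Adj x y) (hy : σ y = σ v ∨ σ y = q) :
    y ∈ disagreementSet G v σ q := by
  obtain ⟨p, hp⟩ := hx
  refine ⟨p.concat hxy, fun w hw => ?_⟩
  rw [SimpleGraph.Walk.support_concat] at hw
  simp only [List.concat_eq_append, List.mem_append, List.mem_singleton] at hw
  rcases hw with hw | hw
  · exact hp w hw
  · subst hw; exact hy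

lemma switching_of_not_mem {G : SimpleGraph V} {v x : V} {σ : V → Fin k} {q : Fin k}
    (hx : x ∉ disagreementSet G v σ q) : switching G v σ q x = σ x := if_neg hx

lemma switching_proper {G : SimpleGraph V} {σ : V → Fin k} (hσ : IsProperColoring G σ)
    (v : V) (q : Fin k) : IsProperColoring G (switching G v σ q) := by
  intro x y hxy heq
  have hσxy := hσ hxy
  by_cases hx : x ∈ disagreementSet G v σ q <;>
    by_cases hy : y ∈ disagreementSet G v σ q
  · have hcx := mem_disagreement_colour hx
    have hcy := mem_disagreement_colour hy
    simp only [switching, if_pos hx, if_pos hy] at heq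
    rcases hcx with h1 | h1 <;> rcases hcy with h2 | h2 <;>
      simp_all <;> split_ifs at heq <;> simp_all
  · have hcy : ¬ (σ y = σ v ∨ σ y = q) := fun h => hy (adj_mem_disagreement hx hxy h)
    have hcx : switching G v σ q x = σ v ∨ switching G v σ q x = q :=
      (switching_colour_iff G v σ q x).mpr (mem_disagreement_colour hx)
    rw [switching_of_not_mem hy] at heq
    rw [heq] at hcx
    exact hcy hcx
  · have hcx : ¬ (σ x = σ v ∨ σ x = q) := fun h => hx (adj_mem_disagreement hy hxy.symm h)
    have hcy : switching G v σ q y = σ v ∨ switching G v σ q y = q :=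
      (switching_colour_iff G v σ q y).mpr (mem_disagreement_colour hy)
    rw [switching_of_not_mem hx] at heq
    rw [← heq] at hcy
    exact hcx hcy
  · simp only [switching, if_neg hx, if_neg hy] at heq
    exact hσxy heq

lemma twoColouredPath_switch (G : SimpleGraph V) (v u : V) (σ : V → Fin k) (q : Fin k) :
    TwoColouredPath G (switching G v σ q) v u (σ v) q ↔ TwoColouredPath G σ v u (σ v) q := by
  unfold TwoColouredPath
  exact exists_congr fun p => forall₂_congr fun w _ => switching_colour_iff G v σ q w

lemma mem_disagreement_iff_path (G : SimpleGraph V) (v u : V) (σ : V → Fin k) (q : Fin k) :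
    u ∈ disagreementSet G v σ q ↔ TwoColouredPath G σ v u (σ v) q := Iff.rfl

end Aux

section Kern
variable {V : Type*} [Fintype V] [DecidableEq V] {k : ℕ}

lemma updateKernel_nonneg (hk : 2 ≤ k) (G : SimpleGraph V) (v u : V) (σ τ : V → Fin k) :
    0 ≤ updateKernel G v u σ τ := by
  have h1 : (0:ℝ) ≤ (k:ℝ) - 1 := by
    have : (2:ℝ) ≤ (k:ℝ) := by exact_mod_cast hk
    linarith
  unfold updateKernel
  split_ifs <;> positivity

lemma updateKernel_row_sum (hk : 2 ≤ k) (G : SimpleGraph V) (v u : V) (σ : V → Fin k) :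
    ∑ τ : V → Fin k, updateKernel G v u σ τ = 1 := by
  unfold updateKernel
  by_cases h : σ v ≠ σ u
  · simp only [if_pos h]
    have hsum : (∑ x : V → Fin k, if x = σ then (1:ℝ) else 0) = 1 := by
      rw [Finset.sum_ite_eq' Finset.univ σ (fun _ => (1:ℝ))]
      simp
    convert hsum using 10
  · simp only [if_neg h]
    rw [← Finset.mul_sum]
    have hfib := Finset.card_eq_sum_card_fiberwise
      (f := fun q : Fin k => switching G v σ q)
      (s := Finset.univ.filter fun q : Fin k => q ≠ σ v) (t := Finset.univ)
      (fun x _ => Finset.mem_univ _)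
    have hcard : (Finset.univ.filter fun q : Fin k => q ≠ σ v).card = k - 1 := by
      rw [Finset.filter_ne', Finset.card_erase_of_mem (Finset.mem_univ _)]
      simp
    have hfib2 : ∑ τ : V → Fin k,
        (Finset.univ.filter fun q : Fin k => q ≠ σ v ∧ switching G v σ q = τ).card = k - 1 := by
      have heq : ∀ τ : V → Fin k,
          (Finset.univ.filter fun q : Fin k => q ≠ σ v ∧ switching G v σ q = τ)
          = ((Finset.univ.filter fun q : Fin k => q ≠ σ v).filter
              fun q => switching G v σ q = τ) := fun τ => by rw [Finset.filter_filter]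
      simp only [heq]
      exact hfib.symm.trans hcard
    rw [← Nat.cast_sum]
    have hk1 : ((k - 1 : ℕ) : ℝ) = (k:ℝ) - 1 := by
      have h1 : 1 ≤ k := by omega
      push_cast [h1]; ring
    have hne : (k:ℝ) - 1 ≠ 0 := by
      have : (2:ℝ) ≤ (k:ℝ) := by exact_mod_cast hk
      linarith
    have main : 1/((k:ℝ)-1) * ((∑ τ : V → Fin k,
        (Finset.univ.filter fun q : Fin k => q ≠ σ v ∧ switching G v σ q = τ).card : ℕ) : ℝ)
        = 1 := by
      rw [hfib2, hk1]
      field_simp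
    convert main using 10
    exact rfl

lemma updateKernel_self {G : SimpleGraph V} {v u : V} {σ : V → Fin k} (h : σ v ≠ σ u) :
    updateKernel G v u σ σ = 1 := by
  unfold updateKernel
  rw [if_pos h, if_pos rfl]

lemma updateKernel_ge_of_switch (hk : 2 ≤ k) {G : SimpleGraph V} {v u : V}
    {σ τ : V → Fin k} (h : σ v = σ u) {q : Fin k} (hq : q ≠ σ v)
    (hsw : switching G v σ q = τ) :
    1/((k:ℝ)-1) ≤ updateKernel G v u σ τ := by
  have h1 : (0:ℝ) < (k:ℝ) - 1 := by
    have : (2:ℝ) ≤ (k:ℝ) := by exact_mod_cast hk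
    linarith
  unfold updateKernel
  rw [if_neg (by simp [h])]
  refine le_mul_of_one_le_right (by positivity) ?_
  rw [Nat.one_le_cast]
  refine Finset.card_pos.mpr ⟨q, ?_⟩
  simp [hq, hsw]

lemma kernel_apply_sum (hk : 2 ≤ k) (G : SimpleGraph V) (v u : V) (f : (V → Fin k) → ℝ) :
    ∑ τ : V → Fin k, ∑ σ : V → Fin k, f σ * updateKernel G v u σ τ = ∑ σ : V → Fin k, f σ := by
  rw [Finset.sum_comm]
  refine Finset.sum_congr rfl fun σ _ => ?_
  rw [← Finset.mul_sum, updateKernel_row_sum hk, mul_one]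

lemma kernel_contract (hk : 2 ≤ k) (G : SimpleGraph V) (v u : V) (f : (V → Fin k) → ℝ) :
    ∑ τ : V → Fin k, |∑ σ : V → Fin k, f σ * updateKernel G v u σ τ|
      ≤ ∑ σ : V → Fin k, |f σ| := by
  calc ∑ τ : V → Fin k, |∑ σ : V → Fin k, f σ * updateKernel G v u σ τ|
      ≤ ∑ τ : V → Fin k, ∑ σ : V → Fin k, |f σ| * updateKernel G v u σ τ := by
        refine Finset.sum_le_sum fun τ _ => ?_
        refine (Finset.abs_sum_le_sum_abs _ _).trans (Finset.sum_le_sum fun σ _ => ?_)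
        rw [abs_mul, abs_of_nonneg (updateKernel_nonneg hk G v u σ τ)]
    _ = ∑ σ : V → Fin k, |f σ| := kernel_apply_sum hk G v u _

end Kern

section Arith

lemma final_arith (α a b d N N' K B Ap : ℝ)
    (hα0 : 0 ≤ α) (hα1 : α ≤ 1) (hbnn : 0 ≤ b) (hann : 0 ≤ a) (hdnn : 0 ≤ d)
    (hN'pos : 0 < N') (hKpos : 0 < K) (hcards : a + b = N') (hND : d + N' = N)
    (hc1 : (1 - α) * N' ≤ a) (hc2 : (1 - α) * K * d ≤ a)
    (hB : B = 1/N' - 1/N) (hApd : Ap = max (1/N' - (1/N + 1/(N*K))) 0) :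
    a * Ap + b * B ≤ α := by
  have hNpos : 0 < N := by linarith
  have hN'leN : N' ≤ N := by linarith
  have hBnn : 0 ≤ B := by
    rw [hB]
    have h := one_div_le_one_div_of_le hN'pos hN'leN
    linarith
  have hN'B : N' * B = d / N := by
    have hd : d = N - N' := by linarith
    rw [hB, mul_sub, mul_one_div, div_self hN'pos.ne', mul_one_div, hd, sub_div,
      div_self hNpos.ne']
  have hdN1 : d / N ≤ 1 := by
    rw [div_le_one hNpos]; linarith
  rcases le_or_gt (1/N' - (1/N + 1/(N*K))) 0 with hA | hA
  · have hAp : Ap = 0 := by rw [hApd]; exact max_eq_right hA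
    have hbα : b ≤ α * N' := by linarith
    calc a * Ap + b * B = b * B := by rw [hAp]; ring
      _ ≤ (α * N') * B := mul_le_mul_of_nonneg_right hbα hBnn
      _ = α * (N' * B) := by ring
      _ = α * (d / N) := by rw [hN'B]
      _ ≤ α := mul_le_of_le_one_right hα0 hdN1
  · have hAp : Ap = 1/N' - (1/N + 1/(N*K)) := by rw [hApd]; exact max_eq_left hA.le
    have hb : b = N' - a := by linarith
    have e : a * Ap + b * B = N' * B - a * (1/(N*K)) := by
      rw [hAp, hB, hb]; ring
    rw [hN'B] at e
    have h3 : (1 - α) * (d / N) ≤ a * (1/(N*K)) := by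
      rw [← mul_div_assoc, mul_one_div, div_le_div_iff₀ hNpos (by positivity)]
      nlinarith [mul_le_mul_of_nonneg_right hc2 hNpos.le]
    have h4 : α * (d / N) ≤ α := mul_le_of_le_one_right hα0 hdN1
    nlinarith [e, h3, h4]

end Arith

section Step
variable {V : Type*} [Fintype V] [DecidableEq V] {k : ℕ}

lemma twoColouredPath_symm {G : SimpleGraph V} {σ : V → Fin k} {v u : V} {c q : Fin k} :
    TwoColouredPath G σ v u c q ↔ TwoColouredPath G σ v u q c :=
  exists_congr fun _ => forall₂_congr fun _ _ => or_comm

lemma sum_uniform (P : (V → Fin k) → Prop) (hne : (Finset.univ.filter P).Nonempty) :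
    ∑ τ : V → Fin k, (if P τ then 1/((Finset.univ.filter P).card : ℝ) else 0) = 1 := by
  rw [Finset.sum_ite, Finset.sum_const, Finset.sum_const_zero, add_zero, nsmul_eq_mul]
  have h0 : ((Finset.univ.filter P).card : ℝ) ≠ 0 := by
    exact_mod_cast Finset.card_ne_zero.mpr hne
  field_simp

set_option maxHeartbeats 2000000 in
lemma step_bound (hk : 2 ≤ k) (G G' : SimpleGraph V) (v u : V) (hvu : v ≠ u)
    (hGG' : ∀ x y : V, G'.Adj x y ↔ G.Adj x y ∨ (x = v ∧ y = u) ∨ (x = u ∧ y = v))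
    (α : ℝ) (hα0 : 0 ≤ α) (hα1 : α ≤ 1)
    (hS1 : ∀ c q : Fin k, c ≠ q →
      (1 - α) * ((Finset.univ.filter fun σ : V → Fin k =>
          IsProperColoring G σ ∧ σ v = c ∧ σ u = c).card : ℝ) ≤
        ((Finset.univ.filter fun σ : V → Fin k =>
          IsProperColoring G σ ∧ σ v = c ∧ σ u = c ∧
          ¬ TwoColouredPath G σ v u c q).card : ℝ))
    (hS2 : ∀ c q : Fin k, c ≠ q →
      (1 - α) * ((Finset.univ.filter fun σ : V → Fin k =>
          IsProperColoring G σ ∧ σ v = q ∧ σ u = c).card : ℝ) ≤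
        ((Finset.univ.filter fun σ : V → Fin k =>
          IsProperColoring G σ ∧ σ v = q ∧ σ u = c ∧
          ¬ TwoColouredPath G σ v u c q).card : ℝ))
    (hne : ∃ σ : V → Fin k, IsProperColoring G' σ) :
    ∑ τ : V → Fin k,
      |(if IsProperColoring G' τ then
          1 / ((Finset.univ.filter fun σ : V → Fin k => IsProperColoring G' σ).card : ℝ)
        else 0)
        - ∑ σ : V → Fin k,
            (if IsProperColoring G σ then
              1 / ((Finset.univ.filter fun σ' : V → Fin k => IsProperColoring G σ').card : ℝ)
            else 0) * updateKernel G v u σ τ| ≤ 2 * α := by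
  classical
  set Ω : Finset (V → Fin k) := Finset.univ.filter fun σ => IsProperColoring G σ with hΩdef
  set Ω' : Finset (V → Fin k) := Finset.univ.filter fun σ => IsProperColoring G' σ with hΩ'def
  set μ : (V → Fin k) → ℝ := fun τ => if IsProperColoring G τ then 1/(Ω.card : ℝ) else 0
    with hμdef
  set μ' : (V → Fin k) → ℝ := fun τ => if IsProperColoring G' τ then 1/(Ω'.card : ℝ) else 0
    with hμ'def
  set ν : (V → Fin k) → ℝ := fun τ => ∑ σ : V → Fin k, μ σ * updateKernel G v u σ τ
    with hνdef
  -- basic graph facts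
  have hsub : ∀ ⦃τ : V → Fin k⦄, IsProperColoring G' τ → IsProperColoring G τ :=
    fun τ h x y hxy => h ((hGG' x y).mpr (Or.inl hxy))
  have hG'vu : G'.Adj v u := (hGG' v u).mpr (Or.inr (Or.inl ⟨rfl, rfl⟩))
  have hproper' : ∀ τ : V → Fin k, IsProperColoring G τ → τ v ≠ τ u →
      IsProperColoring G' τ := by
    intro τ hτ hne' x y hxy
    rcases (hGG' x y).mp hxy with h | ⟨rfl, rfl⟩ | ⟨rfl, rfl⟩
    · exact hτ h
    · exact hne'
    · exact hne'.symm
  have hΩ'sub : Ω' ⊆ Ω := by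
    intro τ hτ
    rw [hΩ'def, Finset.mem_filter] at hτ
    rw [hΩdef, Finset.mem_filter]
    exact ⟨hτ.1, hsub hτ.2⟩
  have hΩ'ne : Ω'.Nonempty := by
    obtain ⟨σ, hσ⟩ := hne
    exact ⟨σ, by rw [hΩ'def, Finset.mem_filter]; exact ⟨Finset.mem_univ _, hσ⟩⟩
  have hN'pos : (0:ℝ) < (Ω'.card : ℝ) := by
    exact_mod_cast Finset.card_pos.mpr hΩ'ne
  have hNpos : (0:ℝ) < (Ω.card : ℝ) := by
    have := Finset.card_le_card hΩ'sub
    have h2 : 0 < Ω.card := lt_of_lt_of_le (Finset.card_pos.mpr hΩ'ne) this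
    exact_mod_cast h2
  have hN'leN : (Ω'.card : ℝ) ≤ (Ω.card : ℝ) := by
    exact_mod_cast Finset.card_le_card hΩ'sub
  have hKpos : (0:ℝ) < (k:ℝ) - 1 := by
    have : (2:ℝ) ≤ (k:ℝ) := by exact_mod_cast hk
    linarith
  set K : ℝ := (k:ℝ) - 1 with hKdef
  set N : ℝ := (Ω.card : ℝ) with hNdef
  set N' : ℝ := (Ω'.card : ℝ) with hN'def
  -- properness facts on Ω'
  have hmemΩ' : ∀ τ : V → Fin k, τ ∈ Ω' ↔ IsProperColoring G' τ := by
    intro τ; rw [hΩ'def, Finset.mem_filter]; simp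
  have hmemΩ : ∀ τ : V → Fin k, τ ∈ Ω ↔ IsProperColoring G τ := by
    intro τ; rw [hΩdef, Finset.mem_filter]; simp
  have hvne : ∀ τ ∈ Ω', τ v ≠ τ u := fun τ hτ => ((hmemΩ' τ).mp hτ) hG'vu
  -- nonnegativity of ν and μ
  have hμnonneg : ∀ σ, 0 ≤ μ σ := by
    intro σ; rw [hμdef]; dsimp only; split_ifs <;> positivity
  have hνnonneg : ∀ τ, 0 ≤ ν τ := by
    intro τ
    exact Finset.sum_nonneg fun σ _ =>
      mul_nonneg (hμnonneg σ) (updateKernel_nonneg hk G v u σ τ)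
  -- lower bound 1 : ν τ ≥ 1/N for τ ∈ Ω'
  have hν1 : ∀ τ ∈ Ω', 1/N ≤ ν τ := by
    intro τ hτ
    have hμτ : μ τ = 1/N := by
      rw [hμdef]; dsimp only; rw [if_pos (hsub ((hmemΩ' τ).mp hτ))]
    have hP : updateKernel G v u τ τ = 1 := updateKernel_self (hvne τ hτ)
    have := Finset.single_le_sum
      (f := fun σ => μ σ * updateKernel G v u σ τ)
      (fun σ _ => mul_nonneg (hμnonneg σ) (updateKernel_nonneg hk G v u σ τ))
      (Finset.mem_univ τ)
    rw [hμτ, hP, mul_one] at this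
    exact this
  -- lower bound 2 : ν τ ≥ 1/N + 1/(N*K) for τ ∈ Ω' with no two-coloured path
  have hν2 : ∀ τ ∈ Ω', ¬ TwoColouredPath G τ v u (τ u) (τ v) →
      1/N + 1/(N*K) ≤ ν τ := by
    intro τ hτ hnp
    have hτG : IsProperColoring G τ := hsub ((hmemΩ' τ).mp hτ)
    have hvu' : τ v ≠ τ u := hvne τ hτ
    set σ₀ : V → Fin k := switching G v τ (τ u) with hσ₀def
    have huQ : u ∉ disagreementSet G v τ (τ u) := by
      intro hu
      exact hnp (twoColouredPath_symm.mp ((mem_disagreement_iff_path G v u τ (τ u)).mp hu))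
    have hσ₀v : σ₀ v = τ u := switching_v G v τ (τ u)
    have hσ₀u : σ₀ u = τ u := switching_of_not_mem huQ
    have hσ₀G : IsProperColoring G σ₀ := switching_proper hτG v (τ u)
    have hσ₀inv : switching G v σ₀ (τ v) = τ := switching_involution G v τ (τ u) hvu'.symm
    have hσ₀ne : σ₀ ≠ τ := by
      intro h
      apply hvu'
      calc τ v = σ₀ v := by rw [h]
        _ = τ u := hσ₀v
    have hμσ₀ : μ σ₀ = 1/N := by
      rw [hμdef]; dsimp only; rw [if_pos hσ₀G]
    have hPσ₀ : 1/K ≤ updateKernel G v u σ₀ τ := by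
      refine updateKernel_ge_of_switch hk (by rw [hσ₀v, hσ₀u]) ?_ hσ₀inv
      rw [hσ₀v]; exact hvu'
    have hpair : ∑ σ ∈ ({τ, σ₀} : Finset (V → Fin k)), μ σ * updateKernel G v u σ τ ≤ ν τ := by
      refine Finset.sum_le_sum_of_subset_of_nonneg (Finset.subset_univ _) ?_
      intro σ _ _
      exact mul_nonneg (hμnonneg σ) (updateKernel_nonneg hk G v u σ τ)
    rw [Finset.sum_pair (Ne.symm hσ₀ne)] at hpair
    have hμτ : μ τ = 1/N := by
      rw [hμdef]; dsimp only; rw [if_pos hτG]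
    rw [hμτ, hμσ₀, updateKernel_self hvu', mul_one] at hpair
    have h2 : 1/N * (1/K) ≤ 1/N * updateKernel G v u σ₀ τ :=
      mul_le_mul_of_nonneg_left hPσ₀ (by positivity)
    have h3 : 1/N * (1/K) = 1/(N*K) := by
      rw [one_div_mul_one_div]
    linarith
  -- sums equal one
  have hΩne : (Finset.univ.filter fun σ : V → Fin k => IsProperColoring G σ).Nonempty := by
    obtain ⟨σ, hσ⟩ := hΩ'ne
    exact ⟨σ, hΩ'sub hσ⟩
  have hμsum : ∑ τ : V → Fin k, μ τ = 1 := by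
    rw [hμdef, hNdef, hΩdef]
    exact sum_uniform _ hΩne
  have hμ'sum : ∑ τ : V → Fin k, μ' τ = 1 := by
    rw [hμ'def, hN'def, hΩ'def]
    exact sum_uniform _ hΩ'ne
  have hνsum : ∑ τ : V → Fin k, ν τ = 1 := by
    rw [hνdef]
    exact (kernel_apply_sum hk G v u μ).trans hμsum
  -- reduce to positive part
  change ∑ τ : V → Fin k, |μ' τ - ν τ| ≤ 2 * α
  have hdiffsum : ∑ τ : V → Fin k, (μ' τ - ν τ) = 0 := by
    rw [Finset.sum_sub_distrib, hμ'sum, hνsum, sub_self]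
  have habs : ∀ x : ℝ, |x| = 2 * max x 0 - x := fun x => by
    rcases le_or_gt x 0 with h | h
    · rw [abs_of_nonpos h, max_eq_right h]; ring
    · rw [abs_of_pos h, max_eq_left h.le]; ring
  have hT : ∑ τ : V → Fin k, |μ' τ - ν τ|
      = 2 * ∑ τ : V → Fin k, max (μ' τ - ν τ) 0 := by
    calc ∑ τ : V → Fin k, |μ' τ - ν τ|
        = ∑ τ : V → Fin k, (2 * max (μ' τ - ν τ) 0 - (μ' τ - ν τ)) :=
          Finset.sum_congr rfl fun τ _ => habs _
      _ = 2 * ∑ τ : V → Fin k, max (μ' τ - ν τ) 0 - ∑ τ : V → Fin k, (μ' τ - ν τ) := by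
          rw [Finset.sum_sub_distrib, Finset.mul_sum]
      _ = _ := by rw [hdiffsum]; ring
  rw [hT]
  have hTle : ∑ τ : V → Fin k, max (μ' τ - ν τ) 0 ≤ α := by
    have hrestrict : ∑ τ : V → Fin k, max (μ' τ - ν τ) 0
        = ∑ τ ∈ Ω', max (μ' τ - ν τ) 0 := by
      refine (Finset.sum_subset (Finset.subset_univ Ω') ?_).symm
      intro τ _ hτ
      have hμ'0 : μ' τ = 0 := by
        rw [hμ'def]; dsimp only; rw [if_neg (fun h => hτ ((hmemΩ' τ).mpr h))]
      rw [hμ'0, zero_sub]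
      exact max_eq_right (by linarith [hνnonneg τ])
    rw [hrestrict]
    set Pno : (V → Fin k) → Prop := fun τ => ¬ TwoColouredPath G τ v u (τ u) (τ v)
      with hPnodef
    rw [← Finset.sum_filter_add_sum_filter_not Ω' Pno]
    set SA : Finset (V → Fin k) := Ω'.filter Pno with hSAdef
    set RB : Finset (V → Fin k) := Ω'.filter (fun τ => ¬ Pno τ) with hRBdef
    set Ap : ℝ := max (1/N' - (1/N + 1/(N*K))) 0 with hApdef
    set B : ℝ := 1/N' - 1/N with hBdef
    -- bounds on the two partial sums
    have hbound1 : ∑ τ ∈ SA, max (μ' τ - ν τ) 0 ≤ (SA.card : ℝ) * Ap := by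
      have h := Finset.sum_le_card_nsmul SA (fun τ => max (μ' τ - ν τ) 0) Ap ?_
      · rwa [nsmul_eq_mul] at h
      · intro τ hτ
        rw [hSAdef, Finset.mem_filter] at hτ
        have hμ'τ : μ' τ = 1/N' := by
          rw [hμ'def]; dsimp only; rw [if_pos ((hmemΩ' τ).mp hτ.1)]
        have hν := hν2 τ hτ.1 hτ.2
        refine max_le (le_trans ?_ (le_max_left _ _)) (le_max_right _ _)
        rw [hμ'τ]; linarith
    have hbound2 : ∑ τ ∈ RB, max (μ' τ - ν τ) 0 ≤ (RB.card : ℝ) * B := by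
      have h := Finset.sum_le_card_nsmul RB (fun τ => max (μ' τ - ν τ) 0) B ?_
      · rwa [nsmul_eq_mul] at h
      · intro τ hτ
        rw [hRBdef, Finset.mem_filter] at hτ
        have hμ'τ : μ' τ = 1/N' := by
          rw [hμ'def]; dsimp only; rw [if_pos ((hmemΩ' τ).mp hτ.1)]
        have hν := hν1 τ hτ.1
        have hBnn : (0:ℝ) ≤ B := by
          rw [hBdef]
          have h2 := one_div_le_one_div_of_le hN'pos hN'leN
          linarith
        refine max_le ?_ hBnn
        rw [hμ'τ, hBdef]; linarith
    -- card splitting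
    have hsplitΩ' : SA.card + RB.card = Ω'.card :=
      Finset.card_filter_add_card_filter_not (p := Pno)
    -- diagonal
    set D : Finset (V → Fin k) := Ω.filter (fun τ => τ v = τ u) with hDdef
    have hDsplit : D.card + Ω'.card = Ω.card := by
      have h1 : Ω.filter (fun τ => ¬ τ v = τ u) = Ω' := by
        ext τ
        rw [Finset.mem_filter]
        constructor
        · rintro ⟨h1, h2⟩
          exact (hmemΩ' τ).mpr (hproper' τ ((hmemΩ τ).mp h1) h2)
        · intro h
          exact ⟨(hmemΩ τ).mpr (hsub ((hmemΩ' τ).mp h)), hvne τ h⟩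
      have h2 := Finset.card_filter_add_card_filter_not
        (s := Ω) (p := fun τ => τ v = τ u)
      rw [h1] at h2
      rw [hDdef]
      exact h2
    -- fiberwise decompositions (nested, first by colour of u, then colour of v)
    have hcardfib : ∀ s : Finset (V → Fin k),
        s.card = ∑ c : Fin k, ∑ q : Fin k,
          (s.filter (fun τ => τ v = q ∧ τ u = c)).card := by
      intro s
      have h1 : s.card = ∑ c : Fin k, (s.filter (fun τ => τ u = c)).card :=
        Finset.card_eq_sum_card_fiberwise (fun τ _ => Finset.mem_univ _)
      rw [h1]
      refine Finset.sum_congr rfl fun c _ => ?_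
      have h2 : (s.filter (fun τ => τ u = c)).card
          = ∑ q : Fin k, ((s.filter (fun τ => τ u = c)).filter (fun τ => τ v = q)).card :=
        Finset.card_eq_sum_card_fiberwise (fun τ _ => Finset.mem_univ _)
      rw [h2]
      refine Finset.sum_congr rfl fun q _ => ?_
      congr 1
      rw [Finset.filter_filter]
      ext τ
      simp only [Finset.mem_filter]
      tauto
    -- identification of fibers
    have hΩ'fib : ∀ q c : Fin k, q ≠ c →
        Ω'.filter (fun τ => τ v = q ∧ τ u = c)
          = Finset.univ.filter (fun σ => IsProperColoring G σ ∧ σ v = q ∧ σ u = c) := by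
      intro q c hqc
      ext τ
      simp only [Finset.mem_filter, Finset.mem_univ, true_and]
      constructor
      · rintro ⟨h1, h2, h3⟩
        exact ⟨hsub ((hmemΩ' τ).mp h1), h2, h3⟩
      · rintro ⟨h1, h2, h3⟩
        refine ⟨(hmemΩ' τ).mpr (hproper' τ h1 ?_), h2, h3⟩
        rw [h2, h3]; exact hqc
    have hΩ'fib_empty : ∀ c : Fin k,
        Ω'.filter (fun τ => τ v = c ∧ τ u = c) = ∅ := by
      intro c
      rw [Finset.filter_eq_empty_iff]
      intro τ hτ h
      exact hvne τ hτ (h.1.trans h.2.symm)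
    have hSAfib : ∀ q c : Fin k, q ≠ c →
        SA.filter (fun τ => τ v = q ∧ τ u = c)
          = Finset.univ.filter (fun σ => IsProperColoring G σ ∧ σ v = q ∧ σ u = c ∧
              ¬ TwoColouredPath G σ v u c q) := by
      intro q c hqc
      ext τ
      simp only [hSAdef, Finset.mem_filter, Finset.mem_univ, true_and]
      constructor
      · rintro ⟨⟨h1, hp⟩, h2, h3⟩
        refine ⟨hsub ((hmemΩ' τ).mp h1), h2, h3, ?_⟩
        rw [hPnodef] at hp
        rwa [h2, h3] at hp
      · rintro ⟨h1, h2, h3, h4⟩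
        refine ⟨⟨(hmemΩ' τ).mpr (hproper' τ h1 (by rw [h2, h3]; exact hqc)), ?_⟩, h2, h3⟩
        rw [hPnodef]; dsimp only
        rwa [h2, h3]
    -- counting inequality 1
    have hcount1 : (1 - α) * N' ≤ (SA.card : ℝ) := by
      have hper : ∀ q c : Fin k,
          (1 - α) * ((Ω'.filter (fun τ => τ v = q ∧ τ u = c)).card : ℝ)
            ≤ ((SA.filter (fun τ => τ v = q ∧ τ u = c)).card : ℝ) := by
        intro q c
        by_cases hqc : q = c
        · subst hqc
          rw [hΩ'fib_empty q]
          simp only [Finset.card_empty, Nat.cast_zero, mul_zero]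
          exact Nat.cast_nonneg _
        · rw [hΩ'fib q c hqc, hSAfib q c hqc]
          exact hS2 c q (Ne.symm hqc)
      calc (1 - α) * N'
          = ∑ c : Fin k, ∑ q : Fin k,
              (1 - α) * ((Ω'.filter (fun τ => τ v = q ∧ τ u = c)).card : ℝ) := by
            rw [hN'def, hcardfib Ω', Nat.cast_sum, Finset.mul_sum]
            refine Finset.sum_congr rfl fun c _ => ?_
            rw [Nat.cast_sum, Finset.mul_sum]
        _ ≤ ∑ c : Fin k, ∑ q : Fin k,
              ((SA.filter (fun τ => τ v = q ∧ τ u = c)).card : ℝ) :=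
            Finset.sum_le_sum fun c _ => Finset.sum_le_sum fun q _ => hper q c
        _ = (SA.card : ℝ) := by
            rw [hcardfib SA, Nat.cast_sum]
            refine Finset.sum_congr rfl fun c _ => ?_
            rw [Nat.cast_sum]
    -- counting inequality 2
    have hinj : ∀ q c : Fin k, q ≠ c →
        ((Finset.univ.filter (fun σ : V → Fin k => IsProperColoring G σ ∧ σ v = c ∧
            σ u = c ∧ ¬ TwoColouredPath G σ v u c q)).card)
          ≤ (SA.filter (fun τ => τ v = q ∧ τ u = c)).card := by
      intro q c hqc
      refine Finset.card_le_card_of_injOn (fun σ => switching G v σ q) ?_ ?_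
      · intro σ hσ
        simp only [Finset.mem_coe, Finset.mem_filter, Finset.mem_univ, true_and] at hσ
        obtain ⟨hp, hv', hu', hnp⟩ := hσ
        have huQ : u ∉ disagreementSet G v σ q := by
          intro hu2
          apply hnp
          have h := (mem_disagreement_iff_path G v u σ q).mp hu2
          rwa [hv'] at h
        have hτv : switching G v σ q v = q := switching_v G v σ q
        have hτu : switching G v σ q u = c := by
          rw [switching_of_not_mem huQ]; exact hu'
        have hτG : IsProperColoring G (switching G v σ q) := switching_proper hp v q
        have hτG' : IsProperColoring G' (switching G v σ q) :=
          hproper' _ hτG (by rw [hτv, hτu]; exact hqc)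
        have hPno : Pno (switching G v σ q) := by
          rw [hPnodef]; dsimp only
          rw [hτv, hτu]
          intro h2
          apply hnp
          rw [← hv']
          refine (twoColouredPath_switch G v u σ q).mp ?_
          rw [hv']
          exact h2
        simp only [hSAdef, Finset.mem_coe, Finset.mem_filter]
        exact ⟨⟨(hmemΩ' _).mpr hτG', hPno⟩, hτv, hτu⟩
      · intro σ₁ h₁ σ₂ h₂ heq
        simp only [Finset.coe_filter, Set.mem_setOf_eq, Finset.mem_univ, true_and] at h₁ h₂
        have hq1 : q ≠ σ₁ v := by rw [h₁.2.1]; exact hqc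
        have hq2 : q ≠ σ₂ v := by rw [h₂.2.1]; exact hqc
        have e1 := switching_involution G v σ₁ q hq1
        have e2 := switching_involution G v σ₂ q hq2
        dsimp only at heq
        rw [h₁.2.1] at e1
        rw [h₂.2.1] at e2
        rw [← e1, ← e2, heq]
    have hcount2 : (1 - α) * K * ((D.card : ℕ) : ℝ) ≤ (SA.card : ℝ) := by
      have hfibD : D.card = ∑ c : Fin k, (D.filter (fun τ => τ u = c)).card :=
        Finset.card_eq_sum_card_fiberwise (fun τ _ => Finset.mem_univ _)
      have hDfib : ∀ c : Fin k, D.filter (fun τ => τ u = c)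
          = Finset.univ.filter
              (fun σ : V → Fin k => IsProperColoring G σ ∧ σ v = c ∧ σ u = c) := by
        intro c
        ext τ
        simp only [hDdef, Finset.mem_filter, Finset.mem_univ, true_and]
        constructor
        · rintro ⟨⟨h1, h2⟩, h3⟩
          exact ⟨(hmemΩ τ).mp h1, h2.trans h3, h3⟩
        · rintro ⟨h1, h2, h3⟩
          exact ⟨⟨(hmemΩ τ).mpr h1, h2.trans h3.symm⟩, h3⟩
      have hK1 : ((k - 1 : ℕ) : ℝ) = K := by
        rw [hKdef]
        have h1 : 1 ≤ k := le_trans one_le_two hk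
        push_cast [h1]; ring
      have hper : ∀ c : Fin k,
          (1 - α) * K * ((D.filter (fun τ => τ u = c)).card : ℝ)
            ≤ ∑ q : Fin k, ((SA.filter (fun τ => τ v = q ∧ τ u = c)).card : ℝ) := by
        intro c
        calc (1 - α) * K * ((D.filter (fun τ => τ u = c)).card : ℝ)
            = ∑ _q ∈ Finset.univ.erase c,
                (1 - α) * ((D.filter (fun τ => τ u = c)).card : ℝ) := by
              rw [Finset.sum_const, Finset.card_erase_of_mem (Finset.mem_univ c),
                Finset.card_univ, Fintype.card_fin, nsmul_eq_mul, hK1]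
              ring
          _ ≤ ∑ q ∈ Finset.univ.erase c,
                ((SA.filter (fun τ => τ v = q ∧ τ u = c)).card : ℝ) := by
              refine Finset.sum_le_sum fun q hq => ?_
              have hqc : q ≠ c := Finset.ne_of_mem_erase hq
              calc (1 - α) * ((D.filter (fun τ => τ u = c)).card : ℝ)
                  ≤ ((Finset.univ.filter (fun σ : V → Fin k => IsProperColoring G σ ∧
                      σ v = c ∧ σ u = c ∧ ¬ TwoColouredPath G σ v u c q)).card : ℝ) := by
                    rw [hDfib c]
                    exact hS1 c q (Ne.symm hqc)
                _ ≤ ((SA.filter (fun τ => τ v = q ∧ τ u = c)).card : ℝ) :=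
                    Nat.cast_le.mpr (hinj q c hqc)
          _ ≤ ∑ q : Fin k, ((SA.filter (fun τ => τ v = q ∧ τ u = c)).card : ℝ) :=
              Finset.sum_le_sum_of_subset_of_nonneg (Finset.subset_univ _)
                (fun q _ _ => Nat.cast_nonneg _)
      calc (1 - α) * K * ((D.card : ℕ) : ℝ)
          = ∑ c : Fin k, (1 - α) * K * ((D.filter (fun τ => τ u = c)).card : ℝ) := by
            rw [hfibD, Nat.cast_sum, Finset.mul_sum]
        _ ≤ ∑ c : Fin k, ∑ q : Fin k,
              ((SA.filter (fun τ => τ v = q ∧ τ u = c)).card : ℝ) :=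
            Finset.sum_le_sum fun c _ => hper c
        _ = (SA.card : ℝ) := by
            rw [hcardfib SA, Nat.cast_sum]
            refine Finset.sum_congr rfl fun c _ => ?_
            rw [Nat.cast_sum]
    -- final arithmetic
    have hcards : (SA.card : ℝ) + (RB.card : ℝ) = N' := by
      rw [hN'def, ← hsplitΩ', Nat.cast_add]
    have hND : ((D.card : ℕ) : ℝ) + N' = N := by
      rw [hN'def, hNdef, ← hDsplit, Nat.cast_add]
    calc ∑ τ ∈ SA, max (μ' τ - ν τ) 0 + ∑ τ ∈ RB, max (μ' τ - ν τ) 0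
        ≤ (SA.card : ℝ) * Ap + (RB.card : ℝ) * B := add_le_add hbound1 hbound2
      _ ≤ α := by
          refine final_arith α (SA.card : ℝ) (RB.card : ℝ) ((D.card : ℕ) : ℝ) N N' K B Ap
            hα0 hα1 (Nat.cast_nonneg _) (Nat.cast_nonneg _) (Nat.cast_nonneg _)
            hN'pos hKpos hcards hND hcount1 hcount2 hBdef hApdef
  linarith


end Step

section Main
variable {V : Type*} [Fintype V] [DecidableEq V] {k : ℕ}

/-- The uniform distribution on proper colourings of `G`. -/
noncomputable def unif (G : SimpleGraph V) {k : ℕ} [Fintype V] : (V → Fin k) → ℝ :=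
  fun τ => if IsProperColoring G τ then
    1 / ((Finset.univ.filter fun σ : V → Fin k => IsProperColoring G σ).card : ℝ)
  else 0

lemma sum_unif {G : SimpleGraph V} (hne : ∃ σ : V → Fin k, IsProperColoring G σ) :
    ∑ τ : V → Fin k, unif G τ = 1 := by
  obtain ⟨σ, hσ⟩ := hne
  exact sum_uniform _ ⟨σ, Finset.mem_filter.mpr ⟨Finset.mem_univ _, hσ⟩⟩

lemma abs_sum_le_half (f : (V → Fin k) → ℝ) (h : ∑ τ : V → Fin k, f τ = 0)
    (S : Finset (V → Fin k)) : |∑ τ ∈ S, f τ| ≤ (∑ τ : V → Fin k, |f τ|)/2 := by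
  have hc : ∑ τ ∈ Sᶜ, f τ = - ∑ τ ∈ S, f τ := by
    have h1 := Finset.sum_add_sum_compl S f
    rw [h] at h1; linarith
  have h1 : |∑ τ ∈ S, f τ| ≤ ∑ τ ∈ S, |f τ| := Finset.abs_sum_le_sum_abs _ _
  have h2 : |∑ τ ∈ S, f τ| = |∑ τ ∈ Sᶜ, f τ| := by rw [hc, abs_neg]
  have h3 : |∑ τ ∈ Sᶜ, f τ| ≤ ∑ τ ∈ Sᶜ, |f τ| := Finset.abs_sum_le_sum_abs _ _
  have h4 : ∑ τ ∈ S, |f τ| + ∑ τ ∈ Sᶜ, |f τ| = ∑ τ : V → Fin k, |f τ| :=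
    Finset.sum_add_sum_compl S _
  linarith

end Main


/-- Accuracy of the random colouring algorithm (Theorem 5.2).  Graphs
`G 0, …, G r` on a common finite vertex set `V` are such that `G (i+1)` is `G i` plus
the single edge `{v i, u i}`.  `G r` is `k`-colourable, and for each `i < r` the number
`α i ∈ [0,1]` satisfies `|S^i_q(c,c)| ≥ (1 - α i)|Ω_i(c,c)|` and
`|S^i_c(q,c)| ≥ (1 - α i)|Ω_i(q,c)|` for all distinct colours `c, q`.  Starting from a
uniformly random proper `k`-colouring `Y 0` of `G 0` and applying `Update` along the
sequence, the law `hatμ r` of `Y r` satisfies `‖μ - hatμ r‖_TV ≤ α 0 + ⋯ + α (r-1)`,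
where `μ` is uniform on the proper `k`-colourings of `G r`. -/
theorem random_colouring_algorithm_accuracy {V : Type*} [Fintype V] [DecidableEq V]
    {k : ℕ} (hk : 2 ≤ k) (r : ℕ) (G : ℕ → SimpleGraph V) (v u : ℕ → V) (α : ℕ → ℝ)
    (hedge : ∀ i < r, v i ≠ u i ∧ ¬ (G i).Adj (v i) (u i) ∧
      ∀ x y : V, (G (i + 1)).Adj x y ↔
        (G i).Adj x y ∨ (x = v i ∧ y = u i) ∨ (x = u i ∧ y = v i))
    (hcol : ∃ σ : V → Fin k, IsProperColoring (G r) σ)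
    (hα : ∀ i < r, 0 ≤ α i ∧ α i ≤ 1 ∧ ∀ c q : Fin k, c ≠ q →
      (1 - α i) * (Nat.card {σ : V → Fin k //
            IsProperColoring (G i) σ ∧ σ (v i) = c ∧ σ (u i) = c} : ℝ) ≤
          (Nat.card {σ : V → Fin k //
            IsProperColoring (G i) σ ∧ σ (v i) = c ∧ σ (u i) = c ∧
            ¬ TwoColouredPath (G i) σ (v i) (u i) c q} : ℝ) ∧
      (1 - α i) * (Nat.card {σ : V → Fin k //
            IsProperColoring (G i) σ ∧ σ (v i) = q ∧ σ (u i) = c} : ℝ) ≤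
          (Nat.card {σ : V → Fin k //
            IsProperColoring (G i) σ ∧ σ (v i) = q ∧ σ (u i) = c ∧
            ¬ TwoColouredPath (G i) σ (v i) (u i) c q} : ℝ))
    (hatμ : ℕ → (V → Fin k) → ℝ)
    (h0 : ∀ τ : V → Fin k, hatμ 0 τ =
      if IsProperColoring (G 0) τ then
        1 / ((Finset.univ.filter fun σ : V → Fin k =>
          IsProperColoring (G 0) σ).card : ℝ)
      else 0)
    (hstep : ∀ i < r, ∀ τ : V → Fin k,
      hatμ (i + 1) τ = ∑ σ : V → Fin k, hatμ i σ * updateKernel (G i) (v i) (u i) σ τ) :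
    ∀ S : Finset (V → Fin k),
      |((Finset.univ.filter fun σ : V → Fin k =>
            IsProperColoring (G r) σ ∧ σ ∈ S).card : ℝ) /
          ((Finset.univ.filter fun σ : V → Fin k =>
            IsProperColoring (G r) σ).card : ℝ) -
        ∑ τ ∈ S, hatμ r τ| ≤ ∑ i ∈ Finset.range r, α i := by
  intro S
  classical
  -- properness descends through the graph sequence
  have hmono : ∀ i < r, ∀ σ : V → Fin k,
      IsProperColoring (G (i+1)) σ → IsProperColoring (G i) σ := by
    intro i hi σ hσ x y hxy
    exact hσ (((hedge i hi).2.2 x y).mpr (Or.inl hxy))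
  obtain ⟨σ0, hσ0⟩ := hcol
  have hdown : ∀ d : ℕ, ∀ j : ℕ, j + d = r → IsProperColoring (G j) σ0 := by
    intro d
    induction d with
    | zero => intro j hj; rw [Nat.add_zero] at hj; rw [hj]; exact hσ0
    | succ n ih =>
      intro j hj
      exact hmono j (by omega) σ0 (ih (j+1) (by omega))
  have hproper_i : ∀ i ≤ r, IsProperColoring (G i) σ0 :=
    fun i hi => hdown (r - i) i (by omega)
  have hne_i : ∀ i ≤ r, ∃ σ : V → Fin k, IsProperColoring (G i) σ :=
    fun i hi => ⟨σ0, hproper_i i hi⟩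
  -- Nat.card versus filter card
  have hNat : ∀ P : (V → Fin k) → Prop,
      Nat.card {σ : V → Fin k // P σ} = (Finset.univ.filter P).card := by
    intro P
    simp [Nat.card_eq_fintype_card, Fintype.card_subtype]
  -- main induction
  have hmain : ∀ i ≤ r, (∑ τ : V → Fin k, hatμ i τ = 1) ∧
      (∑ τ : V → Fin k, |unif (G i) τ - hatμ i τ| ≤ 2 * ∑ j ∈ Finset.range i, α j) := by
    intro i
    induction i with
    | zero =>
      intro _
      have hu0 : ∀ τ : V → Fin k, hatμ 0 τ = unif (G 0) τ := by
        intro τ; rw [h0 τ]; rfl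
      constructor
      · rw [Finset.sum_congr rfl (fun τ _ => hu0 τ)]
        exact sum_unif (hne_i 0 (Nat.zero_le r))
      · have hz : ∀ τ : V → Fin k, |unif (G 0) τ - hatμ 0 τ| = 0 := by
          intro τ; rw [hu0 τ, sub_self, abs_zero]
        rw [Finset.sum_congr rfl (fun τ _ => hz τ)]
        simp
    | succ i ih =>
      intro hi1
      have hi : i < r := hi1
      obtain ⟨ihsum, ihbound⟩ := ih (le_of_lt hi)
      constructor
      · rw [Finset.sum_congr rfl (fun τ _ => hstep i hi τ),
          kernel_apply_sum hk (G i) (v i) (u i) (hatμ i)]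
        exact ihsum
      · have hdecomp : ∀ τ : V → Fin k, unif (G (i+1)) τ - hatμ (i+1) τ
            = (unif (G (i+1)) τ
                - ∑ σ : V → Fin k, unif (G i) σ * updateKernel (G i) (v i) (u i) σ τ)
              + (∑ σ : V → Fin k,
                  (unif (G i) σ - hatμ i σ) * updateKernel (G i) (v i) (u i) σ τ) := by
          intro τ
          rw [hstep i hi τ]
          have hsplit : ∑ σ : V → Fin k,
              (unif (G i) σ - hatμ i σ) * updateKernel (G i) (v i) (u i) σ τ
              = (∑ σ : V → Fin k, unif (G i) σ * updateKernel (G i) (v i) (u i) σ τ)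
                - ∑ σ : V → Fin k, hatμ i σ * updateKernel (G i) (v i) (u i) σ τ := by
            rw [← Finset.sum_sub_distrib]
            exact Finset.sum_congr rfl fun σ _ => by ring
          rw [hsplit]
          ring
        have hS1 : ∀ c q : Fin k, c ≠ q →
            (1 - α i) * ((Finset.univ.filter fun σ : V → Fin k =>
                IsProperColoring (G i) σ ∧ σ (v i) = c ∧ σ (u i) = c).card : ℝ) ≤
              ((Finset.univ.filter fun σ : V → Fin k =>
                IsProperColoring (G i) σ ∧ σ (v i) = c ∧ σ (u i) = c ∧
                ¬ TwoColouredPath (G i) σ (v i) (u i) c q).card : ℝ) := by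
          intro c q hcq
          have h := ((hα i hi).2.2 c q hcq).1
          rw [hNat, hNat] at h
          convert h using 10
        have hS2 : ∀ c q : Fin k, c ≠ q →
            (1 - α i) * ((Finset.univ.filter fun σ : V → Fin k =>
                IsProperColoring (G i) σ ∧ σ (v i) = q ∧ σ (u i) = c).card : ℝ) ≤
              ((Finset.univ.filter fun σ : V → Fin k =>
                IsProperColoring (G i) σ ∧ σ (v i) = q ∧ σ (u i) = c ∧
                ¬ TwoColouredPath (G i) σ (v i) (u i) c q).card : ℝ) := by
          intro c q hcq
          have h := ((hα i hi).2.2 c q hcq).2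
          rw [hNat, hNat] at h
          convert h using 10
        have hstepb : ∑ τ : V → Fin k,
            |unif (G (i+1)) τ
              - ∑ σ : V → Fin k, unif (G i) σ * updateKernel (G i) (v i) (u i) σ τ|
            ≤ 2 * α i :=
          step_bound hk (G i) (G (i+1)) (v i) (u i) (hedge i hi).1
            (fun x y => (hedge i hi).2.2 x y) (α i) (hα i hi).1 (hα i hi).2.1
            hS1 hS2 (hne_i (i+1) hi1)
        have hcontr : ∑ τ : V → Fin k,
            |∑ σ : V → Fin k,
              (unif (G i) σ - hatμ i σ) * updateKernel (G i) (v i) (u i) σ τ|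
            ≤ 2 * ∑ j ∈ Finset.range i, α j :=
          (kernel_contract hk (G i) (v i) (u i)
            (fun σ => unif (G i) σ - hatμ i σ)).trans ihbound
        calc ∑ τ : V → Fin k, |unif (G (i+1)) τ - hatμ (i+1) τ|
            ≤ ∑ τ : V → Fin k,
                (|unif (G (i+1)) τ
                    - ∑ σ : V → Fin k, unif (G i) σ * updateKernel (G i) (v i) (u i) σ τ|
                  + |∑ σ : V → Fin k,
                      (unif (G i) σ - hatμ i σ) * updateKernel (G i) (v i) (u i) σ τ|) :=
              Finset.sum_le_sum fun τ _ => by rw [hdecomp τ]; exact abs_add_le _ _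
          _ = (∑ τ : V → Fin k, |unif (G (i+1)) τ
                - ∑ σ : V → Fin k, unif (G i) σ * updateKernel (G i) (v i) (u i) σ τ|)
              + ∑ τ : V → Fin k, |∑ σ : V → Fin k,
                  (unif (G i) σ - hatμ i σ) * updateKernel (G i) (v i) (u i) σ τ| :=
              Finset.sum_add_distrib
          _ ≤ 2 * α i + 2 * ∑ j ∈ Finset.range i, α j := add_le_add hstepb hcontr
          _ = 2 * ∑ j ∈ Finset.range (i+1), α j := by rw [Finset.sum_range_succ]; ring
  -- conclusion
  have hsumr : ∑ τ : V → Fin k, (unif (G r) τ - hatμ r τ) = 0 := by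
    rw [Finset.sum_sub_distrib, sum_unif (hne_i r le_rfl), (hmain r le_rfl).1, sub_self]
  have hhalf := abs_sum_le_half _ hsumr S
  have hfinal := (hmain r le_rfl).2
  have hSsum : ∑ τ ∈ S, unif (G r) τ
      = ((Finset.univ.filter fun σ : V → Fin k =>
            IsProperColoring (G r) σ ∧ σ ∈ S).card : ℝ)
        / ((Finset.univ.filter fun σ : V → Fin k =>
            IsProperColoring (G r) σ).card : ℝ) := by
    have hset : S.filter (fun σ => IsProperColoring (G r) σ)
        = Finset.univ.filter (fun σ : V → Fin k => IsProperColoring (G r) σ ∧ σ ∈ S) := by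
      ext τ
      simp only [Finset.mem_filter, Finset.mem_univ, true_and]
      tauto
    simp only [unif]
    rw [Finset.sum_ite, Finset.sum_const_zero, add_zero, Finset.sum_const, nsmul_eq_mul,
      hset, mul_one_div]
  rw [← hSsum, ← Finset.sum_sub_distrib]
  refine hhalf.trans ?_
  linarith [hfinal]
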